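/- Define the operators K_W := ½(W·Σ_{i=1}^d(S_i*+S_i) + Σ_{i=1}^d(S_i*+S_i)·W) and B_W := Σ_{i=1}^d (U_i·W̃·(S_i*−S_i) − (S_i*−S_i)·W̃·U_i) on ℓ²(ℤ^d). Then K_W is a compact operator, B_W is a bounded operator, and for every finitely supported u ∈ ℓ²(ℤ^d) one has i(W(A₀u) − A₀(Wu)) = (K_W + B_W)u; that is, the commutator form [W, iA₀] extends to the bounded operator K_W + B_W. -/

import Mathlib

noncomputable section

open scoped ENNReal

/-- The Hilbert space ℓ²(ℤ^d). -/
abbrev l2Zd (d : ℕ) : Type := lp (fun _ : Fin d → ℤ => ℂ) 2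

/-- The generator of dilations A₀ := i Σ_{i=1}^d (½(S_i*+S_i) − (S_i*−S_i)N_i), acting on
functions ℤ^d → ℂ. -/
def A0fun (d : ℕ) (u : (Fin d → ℤ) → ℂ) (n : Fin d → ℤ) : ℂ :=
  Complex.I * ∑ i : Fin d,
    ((u (Function.update n i (n i + 1)) + u (Function.update n i (n i - 1))) / 2 -
      (((n i : ℂ) + 1) * u (Function.update n i (n i + 1)) -
        ((n i : ℂ) - 1) * u (Function.update n i (n i - 1))))

/-- The Wigner-von Neumann potential W(n) = q·sin(k(n₁+…+n_d))/|n|, with W(0) = q. -/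
def WvN (d : ℕ) (q k : ℝ) (n : Fin d → ℤ) : ℝ :=
  if n = 0 then q
  else q * Real.sin (k * ∑ i, (n i : ℝ)) / Real.sqrt (∑ i, (n i : ℝ) ^ 2)

/-- W̃(n) = q·sin(k(n₁+…+n_d)). -/
def WvNt (d : ℕ) (q k : ℝ) (n : Fin d → ℤ) : ℝ := q * Real.sin (k * ∑ i, (n i : ℝ))

/-- U_i(n) = n_i/|n|, with U_i(0) = 0. -/
def Ufun (d : ℕ) (i : Fin d) (n : Fin d → ℤ) : ℝ :=
  if n = 0 then 0 else (n i : ℝ) / Real.sqrt (∑ j, (n j : ℝ) ^ 2)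

/-- K_W = ½(W·Σ_i(S_i*+S_i) + Σ_i(S_i*+S_i)·W), acting on functions. -/
def KWfun (d : ℕ) (q k : ℝ) (u : (Fin d → ℤ) → ℂ) (n : Fin d → ℤ) : ℂ :=
  (1 / 2 : ℂ) *
    ((WvN d q k n : ℂ) * ∑ i : Fin d,
        (u (Function.update n i (n i + 1)) + u (Function.update n i (n i - 1))) +
      ∑ i : Fin d,
        ((WvN d q k (Function.update n i (n i + 1)) : ℂ) * u (Function.update n i (n i + 1)) +
          (WvN d q k (Function.update n i (n i - 1)) : ℂ) * u (Function.update n i (n i - 1))))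

/-- B_W = Σ_i (U_i·W̃·(S_i*−S_i) − (S_i*−S_i)·W̃·U_i), acting on functions. -/
def BWfun (d : ℕ) (q k : ℝ) (u : (Fin d → ℤ) → ℂ) (n : Fin d → ℤ) : ℂ :=
  ∑ i : Fin d,
    ((Ufun d i n : ℂ) * (WvNt d q k n : ℂ) *
        (u (Function.update n i (n i + 1)) - u (Function.update n i (n i - 1))) -
      ((WvNt d q k (Function.update n i (n i + 1)) : ℂ) *
          (Ufun d i (Function.update n i (n i + 1)) : ℂ) * u (Function.update n i (n i + 1)) -
        (WvNt d q k (Function.update n i (n i - 1)) : ℂ) *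
          (Ufun d i (Function.update n i (n i - 1)) : ℂ) * u (Function.update n i (n i - 1))))

/-!
The commutator identity is pointwise algebra once one notices that `n_i W(n) = U_i(n) W̃(n)` for
every `n` (both sides vanish at `n = 0`): with it the terms of `i[W, A₀]` regroup into
`K_W + B_W`. Both operators are built from shifts, which are isometries, and multiplications by
bounded sequences. `K_W` is compact because `|W(n)| ≤ |q| / |n|`, so multiplication by `W` is a
norm limit of multiplications by finitely supported sequences, and those have finite rank.
-/

open scoped Topology
open Filter

theorem Memℓp.comp_equiv {ι E : Type*} [NormedAddCommGroup E] {p : ℝ≥0∞} {u : ι → E}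
    (hu : Memℓp u p) (e : ι ≃ ι) : Memℓp (u ∘ e) p := by
  obtain rfl | rfl | hp := p.trichotomy
  · exact memℓp_zero_iff.2 ((memℓp_zero_iff.1 hu).preimage e.injective.injOn)
  · exact memℓp_infty_iff.2 (e.surjective.range_comp (fun i => ‖u i‖) ▸ memℓp_infty_iff.1 hu)
  · exact (memℓp_gen_iff hp).2
      ((e.summable_iff (f := fun i => ‖u i‖ ^ p.toReal)).2 ((memℓp_gen_iff hp).1 hu))

namespace lp

variable {ι 𝕜 : Type*} [RCLike 𝕜] {p : ℝ≥0∞} [Fact (1 ≤ p)]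

section compEquiv

variable {E : Type*} [NormedAddCommGroup E] [NormedSpace 𝕜 E]

theorem norm_comp_equiv (u : lp (fun _ : ι => E) p) (e : ι ≃ ι) :
    ‖(⟨u ∘ e, (lp.memℓp u).comp_equiv e⟩ : lp (fun _ : ι => E) p)‖ = ‖u‖ := by
  obtain rfl | rfl | hp := p.trichotomy
  · exact absurd (Fact.out : (1 : ℝ≥0∞) ≤ 0) (by norm_num)
  · simp only [norm_eq_ciSup]
    exact e.iSup_comp (g := fun i => ‖u i‖)
  · simp only [norm_eq_tsum_rpow hp]
    rw [← e.tsum_eq (fun i => ‖u i‖ ^ p.toReal)]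
    rfl

variable (𝕜 p) in
def compEquiv (e : ι ≃ ι) : lp (fun _ : ι => E) p →L[𝕜] lp (fun _ : ι => E) p :=
  LinearMap.mkContinuous
    { toFun u := ⟨u ∘ e, (lp.memℓp u).comp_equiv e⟩
      map_add' _ _ := rfl
      map_smul' _ _ := rfl }
    1 fun u => by rw [one_mul]; exact (norm_comp_equiv u e).le

@[simp] theorem compEquiv_apply (e : ι ≃ ι) (u : lp (fun _ : ι => E) p) (i : ι) :
    compEquiv 𝕜 p e u i = u (e i) := rfl

end compEquiv

variable (𝕜 p) in
def mulL : lp (fun _ : ι => 𝕜) ∞ →L[𝕜] lp (fun _ : ι => 𝕜) p →L[𝕜] lp (fun _ : ι => 𝕜) p :=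
  holderL p (fun _ => ContinuousLinearMap.mul 𝕜 𝕜) (K := 1)
    fun _ => ContinuousLinearMap.opNorm_mul_le 𝕜 𝕜

@[simp] theorem mulL_apply_apply (f : lp (fun _ : ι => 𝕜) ∞) (u : lp (fun _ : ι => 𝕜) p)
    (i : ι) : mulL 𝕜 p f u i = f i * u i := rfl

theorem tendsto_sum_single_of_tendsto_norm_cofinite [DecidableEq ι] {E : ι → Type*}
    [∀ i, NormedAddCommGroup (E i)] (f : lp E ∞) (hf : Tendsto (fun i => ‖f i‖) cofinite (𝓝 0)) :
    Tendsto (fun s : Finset ι => ∑ i ∈ s, lp.single ∞ i (f i)) atTop (𝓝 f) := by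
  refine Metric.tendsto_nhds.2 fun ε hε => ?_
  have hlarge : {i | ¬ ‖f i‖ < ε / 2}.Finite :=
    eventually_cofinite.1 (hf.eventually (gt_mem_nhds (half_pos hε)))
  filter_upwards [eventually_ge_atTop hlarge.toFinset] with s hs
  rw [dist_eq_norm]
  refine (norm_le_of_forall_le (half_pos hε).le fun i => ?_).trans_lt (half_lt_self hε)
  simp only [coeFn_sub, coeFn_sum, lp.coeFn_single, Pi.sub_apply, Finset.sum_apply,
    Finset.sum_pi_single]
  split_ifs with hi
  · simpa using (half_pos hε).le
  · have : ‖f i‖ < ε / 2 := not_not.1 fun h => hi (hs (hlarge.mem_toFinset.2 h))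
    simpa using this.le

theorem isCompactOperator_mulL_single [DecidableEq ι] (i : ι) (c : 𝕜) :
    IsCompactOperator (mulL 𝕜 p (lp.single ∞ i c)) := by
  have h : ⇑(mulL 𝕜 p (lp.single ∞ i c)) =
      lp.single p i ∘ ⇑(c • evalCLM 𝕜 (fun _ : ι => 𝕜) p i) := by
    ext u j
    obtain rfl | hji := eq_or_ne j i <;> simp [lp.single_apply, evalCLM, *]
  rw [h]
  exact (isCompactOperator_of_locallyCompactSpace_dom _).continuous_comp
    (isometry_single i).continuous

theorem isCompactOperator_mulL (f : lp (fun _ : ι => 𝕜) ∞)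
    (hf : Tendsto (fun i => ‖f i‖) cofinite (𝓝 0)) : IsCompactOperator (mulL 𝕜 p f) := by
  classical
  refine isCompactOperator_of_tendsto
    (((mulL 𝕜 p).continuous.tendsto f).comp (tendsto_sum_single_of_tendsto_norm_cofinite f hf))
    (Eventually.of_forall fun s => ?_)
  rw [Function.comp_apply, map_sum]
  exact Submodule.sum_mem (compactOperator _ _ _) fun i _ => isCompactOperator_mulL_single i (f i)

end lp

theorem Function.update_add_eq_add_single {ι M : Type*} [DecidableEq ι] [AddZeroClass M]
    (n : ι → M) (i : ι) (a : M) : Function.update n i (n i + a) = n + Pi.single i a := by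
  ext j
  obtain rfl | hji := eq_or_ne j i <;> simp [*]

theorem Function.update_sub_eq_sub_single {ι M : Type*} [DecidableEq ι] [SubNegZeroMonoid M]
    (n : ι → M) (i : ι) (a : M) : Function.update n i (n i - a) = n - Pi.single i a := by
  ext j
  obtain rfl | hji := eq_or_ne j i <;> simp [*]

section IntegerLattice

variable {ι : Type*} [Fintype ι]

theorem one_le_norm_of_ne_zero {n : ι → ℤ} (hn : n ≠ 0) : 1 ≤ ‖n‖ := by
  obtain ⟨j, hj⟩ := Function.ne_iff.1 hn
  calc (1 : ℝ) ≤ ‖n j‖ := by rw [Int.norm_eq_abs]; exact_mod_cast Int.one_le_abs hj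
    _ ≤ ‖n‖ := norm_le_pi_norm n j

theorem abs_le_sqrt_sum_sq (n : ι → ℤ) (i : ι) : |(n i : ℝ)| ≤ √(∑ j, (n j : ℝ) ^ 2) :=
  Real.abs_le_sqrt (Finset.single_le_sum (f := fun j => (n j : ℝ) ^ 2)
    (fun _ _ => sq_nonneg _) (Finset.mem_univ i))

theorem norm_le_sqrt_sum_sq (n : ι → ℤ) : ‖n‖ ≤ √(∑ j, (n j : ℝ) ^ 2) :=
  (pi_norm_le_iff_of_nonneg (Real.sqrt_nonneg _)).2 fun j => by
    rw [Int.norm_eq_abs]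
    exact abs_le_sqrt_sum_sq n j

theorem tendsto_norm_cofinite_atTop : Tendsto (fun n : ι → ℤ => ‖n‖) cofinite atTop := by
  rw [← cocompact_eq_cofinite]
  exact tendsto_norm_cocompact_atTop

end IntegerLattice

section WignerVonNeumann

variable {d : ℕ} (q k : ℝ)

theorem abs_WvN_le_div {n : Fin d → ℤ} (hn : n ≠ 0) : |WvN d q k n| ≤ |q| / ‖n‖ := by
  have hpos : 0 < ‖n‖ := one_pos.trans_le (one_le_norm_of_ne_zero hn)
  rw [WvN, if_neg hn, abs_div, abs_mul, abs_of_nonneg (Real.sqrt_nonneg _)]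
  calc |q| * |Real.sin (k * ∑ i, (n i : ℝ))| / √(∑ i, (n i : ℝ) ^ 2)
      ≤ |q| / √(∑ i, (n i : ℝ) ^ 2) := by
        gcongr
        exact mul_le_of_le_one_right (abs_nonneg q) (Real.abs_sin_le_one _)
    _ ≤ |q| / ‖n‖ := by gcongr; exact norm_le_sqrt_sum_sq n

theorem abs_WvN_le (n : Fin d → ℤ) : |WvN d q k n| ≤ |q| := by
  by_cases hn : n = 0
  · simp [WvN, hn]
  · exact (abs_WvN_le_div q k hn).trans (div_le_self (abs_nonneg q) (one_le_norm_of_ne_zero hn))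

theorem tendsto_abs_WvN_cofinite : Tendsto (fun n => |WvN d q k n|) cofinite (𝓝 0) := by
  refine squeeze_zero' (Eventually.of_forall fun n => abs_nonneg _) ?_
    ((tendsto_const_nhds (x := |q|)).div_atTop tendsto_norm_cofinite_atTop)
  filter_upwards [(Set.finite_singleton (0 : Fin d → ℤ)).compl_mem_cofinite] with n hn
  exact abs_WvN_le_div q k hn

theorem abs_Ufun_le_one (i : Fin d) (n : Fin d → ℤ) : |Ufun d i n| ≤ 1 := by
  by_cases hn : n = 0
  · simp [Ufun, hn]
  · rw [Ufun, if_neg hn, abs_div, abs_of_nonneg (Real.sqrt_nonneg _)]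
    exact div_le_one_of_le₀ (abs_le_sqrt_sum_sq n i) (Real.sqrt_nonneg _)

theorem abs_WvNt_le (n : Fin d → ℤ) : |WvNt d q k n| ≤ |q| := by
  rw [WvNt, abs_mul]
  exact mul_le_of_le_one_right (abs_nonneg q) (Real.abs_sin_le_one _)

theorem coord_mul_WvN (i : Fin d) (n : Fin d → ℤ) :
    (n i : ℝ) * WvN d q k n = Ufun d i n * WvNt d q k n := by
  by_cases hn : n = 0
  · simp [hn, Ufun]
  · simp only [WvN, Ufun, WvNt, if_neg hn]
    ring

end WignerVonNeumann

section Operators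

variable {d : ℕ} (q k : ℝ)

def WvNInfty : lp (fun _ : Fin d → ℤ => ℂ) ∞ :=
  ⟨fun n => (WvN d q k n : ℂ), memℓp_infty ⟨|q|, Set.forall_mem_range.2 fun n => by
    simpa using abs_WvN_le q k n⟩⟩

def UWvNtInfty (i : Fin d) : lp (fun _ : Fin d → ℤ => ℂ) ∞ :=
  ⟨fun n => (Ufun d i n : ℂ) * (WvNt d q k n : ℂ),
    memℓp_infty ⟨|q|, Set.forall_mem_range.2 fun n => by
      simpa using (mul_le_of_le_one_left (abs_nonneg _) (abs_Ufun_le_one i n)).trans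
        (abs_WvNt_le q k n)⟩⟩

variable (d) in
def shiftPlus (i : Fin d) : l2Zd d →L[ℂ] l2Zd d :=
  lp.compEquiv ℂ 2 (Equiv.addRight (Pi.single i 1))

variable (d) in
def shiftMinus (i : Fin d) : l2Zd d →L[ℂ] l2Zd d :=
  lp.compEquiv ℂ 2 (Equiv.addRight (Pi.single i 1)).symm

theorem shiftPlus_apply (i : Fin d) (u : l2Zd d) (n : Fin d → ℤ) :
    shiftPlus d i u n = u (Function.update n i (n i + 1)) := by
  simp [shiftPlus, Function.update_add_eq_add_single]

theorem shiftMinus_apply (i : Fin d) (u : l2Zd d) (n : Fin d → ℤ) :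
    shiftMinus d i u n = u (Function.update n i (n i - 1)) := by
  rw [shiftMinus, lp.compEquiv_apply, Function.update_sub_eq_sub_single]
  rfl

def KWop : l2Zd d →L[ℂ] l2Zd d :=
  let T := ∑ i, (shiftPlus d i + shiftMinus d i)
  (1 / 2 : ℂ) • (lp.mulL ℂ 2 (WvNInfty q k) ∘L T + T ∘L lp.mulL ℂ 2 (WvNInfty q k))

def BWop : l2Zd d →L[ℂ] l2Zd d :=
  ∑ i, (lp.mulL ℂ 2 (UWvNtInfty q k i) ∘L (shiftPlus d i - shiftMinus d i) -
    (shiftPlus d i - shiftMinus d i) ∘L lp.mulL ℂ 2 (UWvNtInfty q k i))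

theorem KWop_apply (u : l2Zd d) (n : Fin d → ℤ) : KWop q k u n = KWfun d q k u n := by
  simp only [KWop, smul_apply, add_apply, sum_apply, ContinuousLinearMap.comp_apply,
    lp.coeFn_smul, lp.coeFn_add, lp.coeFn_sum, Finset.sum_apply, Pi.add_apply, Pi.smul_apply,
    shiftPlus_apply, shiftMinus_apply, lp.mulL_apply_apply]
  simp [KWfun, WvNInfty]

theorem BWop_apply (u : l2Zd d) (n : Fin d → ℤ) : BWop q k u n = BWfun d q k u n := by
  simp only [BWop, sub_apply, sum_apply, ContinuousLinearMap.comp_apply, lp.coeFn_sub,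
    lp.coeFn_sum, Finset.sum_apply, Pi.sub_apply, shiftPlus_apply, shiftMinus_apply,
    lp.mulL_apply_apply]
  simp [BWfun, UWvNtInfty, mul_comm (Ufun d _ _ : ℂ)]

theorem isCompactOperator_KWop : IsCompactOperator (KWop (d := d) q k) := by
  have hW : IsCompactOperator (lp.mulL ℂ 2 (WvNInfty (d := d) q k)) :=
    lp.isCompactOperator_mulL _ (by simpa [WvNInfty] using tendsto_abs_WvN_cofinite q k)
  exact ((hW.comp_clm _).add (hW.clm_comp _)).smul (1 / 2 : ℂ)

theorem I_mul_commutator_A0fun (u : (Fin d → ℤ) → ℂ) (n : Fin d → ℤ) :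
    Complex.I * ((WvN d q k n : ℂ) * A0fun d u n - A0fun d (fun m => (WvN d q k m : ℂ) * u m) n) =
      KWfun d q k u n + BWfun d q k u n := by
  have hI : ∀ x y z : ℂ, Complex.I * (x * (Complex.I * y) - Complex.I * z) = z - x * y :=
    fun x y z => by linear_combination (x * y - z) * Complex.I_sq
  simp only [A0fun, KWfun, BWfun, hI, Finset.mul_sum, ← Finset.sum_sub_distrib,
    ← Finset.sum_add_distrib]
  refine Finset.sum_congr rfl fun i _ => ?_
  have hn := congrArg Complex.ofReal (coord_mul_WvN q k i n)
  have hp := congrArg Complex.ofReal (coord_mul_WvN q k i (Function.update n i (n i + 1)))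
  have hm := congrArg Complex.ofReal (coord_mul_WvN q k i (Function.update n i (n i - 1)))
  simp only [Function.update_self] at hp hm
  push_cast at hn hp hm
  linear_combination u (Function.update n i (n i + 1)) * (hn - hp)
    + u (Function.update n i (n i - 1)) * (hm - hn)

end Operators

theorem WvN_A0_commutator_general (d : ℕ) (q : ℝ) (k : ℝ) :
    ∃ KW BW : l2Zd d →L[ℂ] l2Zd d,
      (∀ (u : l2Zd d) (n : Fin d → ℤ), (KW u) n = KWfun d q k (⇑u) n) ∧
      (∀ (u : l2Zd d) (n : Fin d → ℤ), (BW u) n = BWfun d q k (⇑u) n) ∧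
      IsCompactOperator (⇑KW) ∧
      ∀ u : (Fin d → ℤ) → ℂ, (Function.support u).Finite → ∀ n : Fin d → ℤ,
        Complex.I * ((WvN d q k n : ℂ) * A0fun d u n -
            A0fun d (fun m => (WvN d q k m : ℂ) * u m) n) =
          KWfun d q k u n + BWfun d q k u n :=
  ⟨KWop q k, BWop q k, KWop_apply q k, BWop_apply q k, isCompactOperator_KWop q k,
    fun u _ n => I_mul_commutator_A0fun q k u n⟩

/-- K_W is compact, B_W is bounded, and the commutator form [W, iA₀] extends to
the bounded operator K_W + B_W: for all finitely supported u,
i(W(A₀u) − A₀(Wu)) = (K_W + B_W)u. -/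
theorem WvN_A0_commutator (d : ℕ) (hd : 1 ≤ d) (q : ℝ) (hq : q ≠ 0) (k : ℝ)
    (hk : ∀ m : ℤ, k ≠ m * Real.pi) :
    ∃ KW BW : l2Zd d →L[ℂ] l2Zd d,
      (∀ (u : l2Zd d) (n : Fin d → ℤ), (KW u) n = KWfun d q k (⇑u) n) ∧
      (∀ (u : l2Zd d) (n : Fin d → ℤ), (BW u) n = BWfun d q k (⇑u) n) ∧
      IsCompactOperator (⇑KW) ∧
      ∀ u : (Fin d → ℤ) → ℂ, (Function.support u).Finite → ∀ n : Fin d → ℤ,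
        Complex.I * ((WvN d q k n : ℂ) * A0fun d u n -
            A0fun d (fun m => (WvN d q k m : ℂ) * u m) n) =
          KWfun d q k u n + BWfun d q k u n :=
  WvN_A0_commutator_general d q k
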